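/- For any prime p ≥ 7, if A, B ⊆ {0,...,p−1} are AGL(p)-neighboring sets, then |A| + |B| ≥ max{√(2(p−1)), 6}; in particular 2|A||B| ≥ p − 1. -/

import Mathlib

/-!
Only the reflections `x ↦ c - x` are needed. A reflection is an involution, so it maps `A` into `B`
or `B` into `A` exactly when `c ∈ A + B`. As `2 ≠ 0` in `ZMod p`, no reflection is the identity, so
`A + B` is all of `ZMod p` and `p ≤ |A + B| ≤ |A| |B|`. Both bounds follow from
`(|A| + |B|)² ≥ 4 |A| |B| ≥ 4p`.
-/

/-- `f` is an affine permutation `x ↦ a x + b` with `a ≠ 0`, i.e. an element of `AGL(p)`. -/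
def IsAffine (p : ℕ) (f : Equiv.Perm (ZMod p)) : Prop :=
  ∃ a b : ZMod p, a ≠ 0 ∧ ∀ x : ZMod p, f x = a * x + b

open Finset Pointwise

theorem Finset.card_le_card_mul_card_of_forall_sub_mem {G : Type*} [AddCommGroup G] [Fintype G]
    [DecidableEq G] {A B : Finset G}
    (h : ∀ c, (∃ a ∈ A, c - a ∈ B) ∨ (∃ b ∈ B, c - b ∈ A)) :
    Fintype.card G ≤ #A * #B := by
  have huniv : (univ : Finset G) ⊆ A + B := by
    intro c _
    rcases h c with ⟨a, ha, hca⟩ | ⟨b, hb, hcb⟩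
    · simpa using add_mem_add ha hca
    · simpa using add_mem_add hcb hb
  calc Fintype.card G = #(univ : Finset G) := card_univ.symm
    _ ≤ #(A + B) := card_le_card huniv
    _ ≤ #A * #B := card_add_le

theorem isAffine_subLeft {p : ℕ} [Fact (1 < p)] (c : ZMod p) : IsAffine p (Equiv.subLeft c) :=
  ⟨-1, c, neg_ne_zero.mpr one_ne_zero, fun x => by simp [sub_eq_neg_add]⟩

theorem subLeft_ne_one {p : ℕ} (hp : 2 < p) (c : ZMod p) : Equiv.subLeft c ≠ 1 := by
  intro h
  have hfix (x : ZMod p) : c - x = x := DFunLike.congr_fun h x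
  have h2 : ((2 : ℕ) : ZMod p) = 0 := by
    push_cast
    linear_combination hfix 0 - hfix 1
  have := Nat.le_of_dvd two_pos ((ZMod.natCast_eq_zero_iff 2 p).mp h2)
  omega

theorem le_card_mul_card_of_neighboring {p : ℕ} [NeZero p] (hp : 2 < p) {A B : Finset (ZMod p)}
    (hnb : ∀ f : Equiv.Perm (ZMod p), IsAffine p f → f ≠ 1 →
      (∃ a ∈ A, f a ∈ B) ∨ (∃ b ∈ B, f b ∈ A)) :
    p ≤ #A * #B := by
  have : Fact (1 < p) := ⟨by omega⟩
  simpa [ZMod.card] using Finset.card_le_card_mul_card_of_forall_sub_mem fun c =>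
    hnb (Equiv.subLeft c) (isAffine_subLeft c) (subLeft_ne_one hp c)

theorem agl_neighboring_sets_lower_bound_general (p : ℕ) [NeZero p] (h7 : 7 ≤ p)
    (A B : Finset (ZMod p))
    (hnb : ∀ f : Equiv.Perm (ZMod p), IsAffine p f → f ≠ 1 →
      (∃ a ∈ A, f a ∈ B) ∨ (∃ b ∈ B, f b ∈ A)) :
    max (Real.sqrt (2 * (p - 1))) 6 ≤ (A.card : ℝ) + (B.card : ℝ) ∧
    p - 1 ≤ 2 * A.card * B.card := by
  have hprod : p ≤ #A * #B := le_card_mul_card_of_neighboring (by omega) hnb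
  have hsq : 4 * p ≤ (#A + #B) ^ 2 :=
    (Nat.mul_le_mul_left 4 hprod).trans (by simpa [mul_assoc] using four_mul_le_sq_add #A #B)
  have hsq' : 4 * (p : ℝ) ≤ ((#A : ℝ) + #B) ^ 2 := by exact_mod_cast hsq
  refine ⟨max_le ?_ ?_, ?_⟩
  · exact Real.sqrt_le_iff.mpr ⟨by positivity, by linarith⟩
  · have : 6 ≤ #A + #B := by nlinarith
    exact_mod_cast this
  · calc p - 1 ≤ #A * #B := by omega
      _ ≤ 2 * #A * #B := by rw [mul_assoc]; omega

/-- For any prime `p ≥ 7`, any `AGL(p)`-neighboring sets `A, B` satisfy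
`|A| + |B| ≥ max {√(2(p-1)), 6}`, and in particular `2|A||B| ≥ p - 1`. -/
theorem agl_neighboring_sets_lower_bound (p : ℕ) [NeZero p] (hp : p.Prime) (h7 : 7 ≤ p)
    (A B : Finset (ZMod p)) (hAB : Disjoint A B)
    (hnb : ∀ f : Equiv.Perm (ZMod p), IsAffine p f → f ≠ 1 →
      (∃ a ∈ A, f a ∈ B) ∨ (∃ b ∈ B, f b ∈ A)) :
    max (Real.sqrt (2 * (p - 1))) 6 ≤ (A.card : ℝ) + (B.card : ℝ) ∧
    p - 1 ≤ 2 * A.card * B.card :=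
  agl_neighboring_sets_lower_bound_general p h7 A B hnb
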